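/- arXiv:2110.00040 — 7 statements merged into one kernel-verified Lean document; each statement's English description precedes it below -/
import Mathlib

section
/- Let g : ℝ⁺ → ℝ⁺ satisfy lim_{n→∞} g(n+1)/g(n) = 1 (limit over positive integers n). Suppose f : ℝ⁺ → ℝ⁺ is eventually log-convex (i.e., log f is convex on some interval (M, ∞)), satisfies f(x+1) = g(x) f(x) for all x > 0, and f(1) = 1. Then for every x > 0, f(x) = lim_{n→∞} [g(n)⋯g(1) · g(n)^x] / [g(n+x) g(n+x-1) ⋯ g(x)], where the denominator is the product g(x+k) for k = 0, 1, …, n. -/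
/-!
By the functional equation, `gammaTypeSeq g x n = f x · f(n+1) g(n)^x / f(n+1+x)`, so it suffices
that this ratio tends to `1`. For `0 < x ≤ 1` and large `n`, comparing slopes of the convex
function `log f` on `n < n+1 < n+1+x ≤ n+2` squeezes the ratio between `(g n / g (n+1))^x` and `1`,
and `g (n+1) / g n → 1` closes the squeeze. Replacing `x` by `x + 1` multiplies the ratio at `n`
by `(g n / g (n+1))^(x+1)` after shifting `n` to `n + 1`, which extends the limit to all `x > 0`.
-/

open Filter Finset Real

/-- The sequence whose limit defines the gamma type function of `g`:
`(g(n)⋯g(1) · g(n)^x) / (g(x) g(x+1) ⋯ g(x+n))`. -/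
noncomputable def gammaTypeSeq (g : ℝ → ℝ) (x : ℝ) (n : ℕ) : ℝ :=
  ((∏ k ∈ Finset.Icc 1 n, g k) * g n ^ x) / ∏ k ∈ Finset.range (n + 1), g (x + k)

/-- For `f = Γ` this is `Γ(n+1) n^x / Γ(n+1+x)`, the ratio of Wendel's limit. -/
noncomputable def wendelRatio (f g : ℝ → ℝ) (x : ℝ) (n : ℕ) : ℝ :=
  f ((n : ℝ) + 1) * g n ^ x / f (n + 1 + x)

lemma ConvexOn.mul_sub_le_sub_le_mul_sub {s : Set ℝ} {φ : ℝ → ℝ} (hφ : ConvexOn ℝ s φ)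
    {a x : ℝ} (ha₀ : a - 1 ∈ s) (ha₁ : a + 1 ∈ s) (hx₀ : 0 < x) (hx₁ : x ≤ 1) :
    x * (φ a - φ (a - 1)) ≤ φ (a + x) - φ a ∧ φ (a + x) - φ a ≤ x * (φ (a + 1) - φ a) := by
  have hIcc := hφ.1.ordConnected.out ha₀ ha₁
  have ha : a ∈ s := hIcc ⟨by linarith, by linarith⟩
  have hax : a + x ∈ s := hIcc ⟨by linarith, by linarith⟩
  have hleft := hφ.secant_mono ha ha₀ hax (by linarith) (by linarith) (by linarith)
  have hright := hφ.secant_mono ha hax ha₁ (by linarith) (by linarith) (by linarith)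
  simp only [sub_sub_cancel_left, add_sub_cancel_left, div_neg, div_one, neg_sub] at hleft hright
  constructor
  · rwa [le_div_iff₀ hx₀, mul_comm] at hleft
  · rwa [div_le_iff₀ hx₀, mul_comm] at hright

section FunctionalEquation

variable {f g : ℝ → ℝ}

lemma apply_add_nat_eq_mul_prod (hfe : ∀ x > 0, f (x + 1) = g x * f x) {x : ℝ} (hx : 0 < x)
    (n : ℕ) : f (x + n) = f x * ∏ k ∈ range n, g (x + k) := by
  induction n with
  | zero => simp
  | succ n ih =>
    rw [Nat.cast_succ, ← add_assoc, hfe _ (by positivity), ih, prod_range_succ]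
    ring

lemma apply_nat_add_one_eq_prod (hfe : ∀ x > 0, f (x + 1) = g x * f x) (hf1 : f 1 = 1)
    (n : ℕ) : f ((n : ℝ) + 1) = ∏ k ∈ Icc 1 n, g k := by
  rw [add_comm, apply_add_nat_eq_mul_prod hfe one_pos, hf1, one_mul,
    ← Ico_add_one_right_eq_Icc, prod_Ico_eq_prod_range, Nat.add_sub_cancel]
  push_cast
  rfl

lemma gammaTypeSeq_eq_mul_wendelRatio (hfe : ∀ x > 0, f (x + 1) = g x * f x) (hf1 : f 1 = 1)
    {x : ℝ} (hx : 0 < x) (hfx : f x ≠ 0) (n : ℕ) :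
    gammaTypeSeq g x n = f x * wendelRatio f g x n := by
  have hshift : f (n + 1 + x) = f x * ∏ k ∈ range (n + 1), g (x + k) := by
    rw [← apply_add_nat_eq_mul_prod hfe hx]
    push_cast
    ring_nf
  rw [gammaTypeSeq, wendelRatio, hshift, apply_nat_add_one_eq_prod hfe hf1]
  field_simp

lemma tendsto_div_rpow_atTop (hseq : Tendsto (fun n : ℕ => g ((n : ℝ) + 1) / g n) atTop (nhds 1))
    (y : ℝ) : Tendsto (fun n : ℕ => (g n / g ((n : ℝ) + 1)) ^ y) atTop (nhds 1) := by
  simpa [inv_div] using (hseq.inv₀ one_ne_zero).rpow_const (p := y) (by norm_num)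

lemma wendelRatio_mem_Icc (hg : ∀ x > 0, 0 < g x) (hf : ∀ x > 0, 0 < f x)
    (hfe : ∀ x > 0, f (x + 1) = g x * f x) {M : ℝ} (hconv : ConvexOn ℝ (Set.Ioi M) (log ∘ f))
    {n : ℕ} (hn₀ : 0 < n) (hnM : M < n) {x : ℝ} (hx₀ : 0 < x) (hx₁ : x ≤ 1) :
    wendelRatio f g x n ∈ Set.Icc ((g n / g ((n : ℝ) + 1)) ^ x) 1 := by
  have hn : (0 : ℝ) < n := by exact_mod_cast hn₀
  have hgn := hg n hn
  have hgn₁ := hg (n + 1) (by positivity)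
  obtain ⟨hlow, hupp⟩ := hconv.mul_sub_le_sub_le_mul_sub (a := n + 1) (x := x)
    (by simpa using hnM) (by simp only [Set.mem_Ioi]; linarith) hx₀ hx₁
  simp only [Function.comp, add_sub_cancel_right, add_assoc, one_add_one_eq_two] at hlow hupp
  have hfn₁ : f ((n : ℝ) + 1) = g n * f n := hfe n hn
  have hfn₂ : f ((n : ℝ) + 2) = g ((n : ℝ) + 1) * f ((n : ℝ) + 1) := by
    rw [← hfe _ (by positivity)]; ring_nf
  have hslope₁ : log (f ((n : ℝ) + 1)) - log (f n) = log (g n) := by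
    rw [hfn₁, log_mul hgn.ne' (hf n hn).ne']; ring
  have hslope₂ : log (f ((n : ℝ) + 2)) - log (f ((n : ℝ) + 1)) = log (g ((n : ℝ) + 1)) := by
    rw [hfn₂, log_mul hgn₁.ne' (hf _ (by positivity)).ne']; ring
  rw [hslope₁] at hlow
  rw [hslope₂] at hupp
  set L := log (f (n + (1 + x))) - log (f (n + 1))
  have hW : wendelRatio f g x n = exp (x * log (g n) - L) := by
    rw [wendelRatio, exp_sub, exp_sub, exp_log (hf _ (by positivity)),
      exp_log (hf _ (by positivity)), rpow_def_of_pos hgn, mul_comm, add_assoc]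
    field_simp
  have hR : (g n / g ((n : ℝ) + 1)) ^ x = exp (x * (log (g n) - log (g ((n : ℝ) + 1)))) := by
    rw [rpow_def_of_pos (by positivity), log_div hgn.ne' hgn₁.ne', mul_comm]
  rw [hW, hR, Set.mem_Icc, exp_le_exp, exp_le_one_iff]
  constructor <;> linarith

lemma tendsto_wendelRatio_of_le_one (hg : ∀ x > 0, 0 < g x) (hf : ∀ x > 0, 0 < f x)
    (hseq : Tendsto (fun n : ℕ => g ((n : ℝ) + 1) / g n) atTop (nhds 1))
    (hfe : ∀ x > 0, f (x + 1) = g x * f x) {M : ℝ} (hconv : ConvexOn ℝ (Set.Ioi M) (log ∘ f))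
    {x : ℝ} (hx₀ : 0 < x) (hx₁ : x ≤ 1) : Tendsto (wendelRatio f g x) atTop (nhds 1) := by
  have hbounds : ∀ᶠ n : ℕ in atTop,
      wendelRatio f g x n ∈ Set.Icc ((g n / g ((n : ℝ) + 1)) ^ x) 1 := by
    filter_upwards [eventually_gt_atTop 0, tendsto_natCast_atTop_atTop.eventually_gt_atTop M]
      with n hn₀ hnM
    exact wendelRatio_mem_Icc hg hf hfe hconv hn₀ hnM hx₀ hx₁
  exact tendsto_of_tendsto_of_tendsto_of_le_of_le' (tendsto_div_rpow_atTop hseq x)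
    tendsto_const_nhds (hbounds.mono fun _ h => h.1) (hbounds.mono fun _ h => h.2)

lemma wendelRatio_add_one (hg : ∀ x > 0, 0 < g x) (hfe : ∀ x > 0, f (x + 1) = g x * f x)
    (x : ℝ) {n : ℕ} (hn : 0 < n) :
    wendelRatio f g (x + 1) n = wendelRatio f g x (n + 1) * (g n / g ((n : ℝ) + 1)) ^ (x + 1) := by
  have hn' : (0 : ℝ) < n := by exact_mod_cast hn
  have hgn := hg n hn'
  have hgn₁ := hg (n + 1) (by positivity)
  rw [wendelRatio, wendelRatio, Nat.cast_succ, hfe (n + 1) (by positivity),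
    div_rpow hgn.le hgn₁.le, rpow_add_one hgn.ne', rpow_add_one hgn₁.ne',
    show (n : ℝ) + 1 + (x + 1) = n + 1 + 1 + x by ring]
  field_simp

lemma tendsto_wendelRatio (hg : ∀ x > 0, 0 < g x) (hf : ∀ x > 0, 0 < f x)
    (hseq : Tendsto (fun n : ℕ => g ((n : ℝ) + 1) / g n) atTop (nhds 1))
    (hfe : ∀ x > 0, f (x + 1) = g x * f x) {M : ℝ} (hconv : ConvexOn ℝ (Set.Ioi M) (log ∘ f))
    {x : ℝ} (hx : 0 < x) : Tendsto (wendelRatio f g x) atTop (nhds 1) := by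
  obtain ⟨m, hm⟩ : ∃ m : ℕ, x ≤ m + 1 := ⟨⌈x⌉₊, (Nat.le_ceil x).trans (by linarith)⟩
  induction m generalizing x with
  | zero => exact tendsto_wendelRatio_of_le_one hg hf hseq hfe hconv hx (by simpa using hm)
  | succ m ih =>
    rcases le_or_gt x 1 with hx₁ | hx₁
    · exact tendsto_wendelRatio_of_le_one hg hf hseq hfe hconv hx hx₁
    have hprev := ih (x := x - 1) (by linarith) (by push_cast at hm; linarith)
    have hlim := (hprev.comp (tendsto_add_atTop_nat 1)).mul (tendsto_div_rpow_atTop hseq x)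
    rw [one_mul] at hlim
    refine hlim.congr' ?_
    filter_upwards [eventually_gt_atTop 0] with n hn
    simpa using (wendelRatio_add_one hg hfe (x - 1) hn).symm

end FunctionalEquation

theorem webster_weakened (g f : ℝ → ℝ)
    (hg : ∀ x > 0, 0 < g x) (hf : ∀ x > 0, 0 < f x)
    (hseq : Tendsto (fun n : ℕ => g ((n : ℝ) + 1) / g n) atTop (nhds 1))
    (hconv : ∃ M : ℝ, ConvexOn ℝ (Set.Ioi M) (fun x => Real.log (f x)))
    (hfe : ∀ x > 0, f (x + 1) = g x * f x)
    (hf1 : f 1 = 1) :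
    ∀ x > 0, Tendsto (gammaTypeSeq g x) atTop (nhds (f x)) := by
  obtain ⟨M, hconv⟩ := hconv
  intro x hx
  have hlim := (tendsto_wendelRatio hg hf hseq hfe hconv hx).const_mul (f x)
  rw [mul_one] at hlim
  exact hlim.congr fun n => (gammaTypeSeq_eq_mul_wendelRatio hfe hf1 hx (hf x hx).ne' n).symm
end

section
/- Let g : ℝ⁺ → ℝ⁺ be eventually log-concave (log g concave on some interval (M,∞)) and suppose g(n+1)/g(n) → 1 as the positive integer n → ∞. Then lim_{x→∞} g(x+w)/g(x) = 1 for every w > 0 (limit over real x). -/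
/-! On the half-line where `f = log g` is concave, slopes of `f` decrease. For `x` large, the
increment `f (x + w) - f x` is therefore squeezed between `w` times the unit increments of `f`
at `⌈x + w⌉₊` and at `⌊x - 1⌋₊`, both of which tend to `0` by the sequential hypothesis. -/

open Filter Real Set Topology

namespace ConcaveOn

variable {f : ℝ → ℝ} {M : ℝ}

lemma slope_le_slope_of_le (hf : ConcaveOn ℝ (Ioi M) f) {a b c d : ℝ}
    (ha : M < a) (hab : a < b) (hbc : b ≤ c) (hcd : c < d) :
    (f d - f c) / (d - c) ≤ (f b - f a) / (b - a) := by
  have hc : M < c := by linarith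
  rcases hbc.eq_or_lt with rfl | hbc
  · exact hf.slope_anti_adjacent ha (hc.trans hcd) hab hcd
  · calc (f d - f c) / (d - c) ≤ (f c - f b) / (c - b) :=
          hf.slope_anti_adjacent (ha.trans hab) (hc.trans hcd) hbc hcd
      _ ≤ (f b - f a) / (b - a) := hf.slope_anti_adjacent ha hc hab hbc

lemma mul_unit_secant_le_sub (hf : ConcaveOn ℝ (Ioi M) f) {x w c : ℝ}
    (hx : M < x) (hw : 0 < w) (hc : x + w ≤ c) :
    w * (f (c + 1) - f c) ≤ f (x + w) - f x := by
  have h := hf.slope_le_slope_of_le hx (lt_add_of_pos_right x hw) hc (lt_add_one c)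
  rw [add_sub_cancel_left, add_sub_cancel_left, div_one, le_div_iff₀ hw] at h
  linarith

lemma sub_le_mul_unit_secant (hf : ConcaveOn ℝ (Ioi M) f) {x w c : ℝ}
    (hc : M < c) (hw : 0 < w) (hx : c + 1 ≤ x) :
    f (x + w) - f x ≤ w * (f (c + 1) - f c) := by
  have h := hf.slope_le_slope_of_le hc (lt_add_one c) hx (lt_add_of_pos_right x hw)
  rw [add_sub_cancel_left, add_sub_cancel_left, div_one, div_le_iff₀ hw] at h
  linarith

lemma tendsto_sub_of_tendsto_nat (hf : ConcaveOn ℝ (Ioi M) f)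
    (hseq : Tendsto (fun n : ℕ => f (n + 1) - f n) atTop (𝓝 0)) {w : ℝ} (hw : 0 < w) :
    Tendsto (fun x => f (x + w) - f x) atTop (𝓝 0) := by
  have along {i : ℝ → ℕ} (hi : Tendsto i atTop atTop) :
      Tendsto (fun x => w * (f ((i x : ℝ) + 1) - f (i x))) atTop (𝓝 0) := by
    simpa using (hseq.comp hi).const_mul w
  have hceil : Tendsto (fun x : ℝ => ⌈x + w⌉₊) atTop atTop :=
    tendsto_nat_ceil_atTop.comp (tendsto_atTop_add_const_right _ w tendsto_id)
  have hfloor : Tendsto (fun x : ℝ => ⌊x - 1⌋₊) atTop atTop :=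
    tendsto_nat_floor_atTop.comp (tendsto_atTop_add_const_right _ (-1) tendsto_id)
  refine tendsto_of_tendsto_of_tendsto_of_le_of_le' (along hceil) (along hfloor) ?_ ?_
  · filter_upwards [eventually_gt_atTop M] with x hx
    exact hf.mul_unit_secant_le_sub hx hw (Nat.le_ceil _)
  · filter_upwards [eventually_ge_atTop (M + 2), eventually_ge_atTop 1] with x hxM hx1
    have hlow := Nat.sub_one_lt_floor (x - 1)
    have hup := Nat.floor_le (sub_nonneg.mpr hx1)
    exact hf.sub_le_mul_unit_secant (by linarith) hw (by linarith)

end ConcaveOn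

lemma tendsto_nhds_one_iff_tendsto_log_nhds_zero {α : Type*} {l : Filter α} {u : α → ℝ}
    (hu : ∀ᶠ a in l, 0 < u a) :
    Tendsto u l (𝓝 1) ↔ Tendsto (fun a => log (u a)) l (𝓝 0) := by
  constructor
  · intro h
    simpa using h.log one_ne_zero
  · intro h
    refine (by simpa using h.rexp : Tendsto (fun a => exp (log (u a))) l (𝓝 1)).congr' ?_
    filter_upwards [hu] with a ha using exp_log ha

lemma tendsto_div_nhds_one_iff_tendsto_log_sub {α : Type*} {l : Filter α} {g : ℝ → ℝ}
    {s t : α → ℝ} (hg : ∀ x > 0, 0 < g x) (hs : ∀ᶠ a in l, 0 < s a) (ht : ∀ᶠ a in l, 0 < t a) :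
    Tendsto (fun a => g (s a) / g (t a)) l (𝓝 1) ↔
      Tendsto (fun a => log (g (s a)) - log (g (t a))) l (𝓝 0) := by
  have hst := hs.and ht
  rw [tendsto_nhds_one_iff_tendsto_log_nhds_zero
    (hst.mono fun a ha => div_pos (hg _ ha.1) (hg _ ha.2))]
  exact tendsto_congr' (hst.mono fun a ha => log_div (hg _ ha.1).ne' (hg _ ha.2).ne')

theorem sequential_implies_continuous_of_eventually_logConcave (g : ℝ → ℝ)
    (hg : ∀ x > 0, 0 < g x)
    (hconc : ∃ M : ℝ, ConcaveOn ℝ (Set.Ioi M) (fun x => Real.log (g x)))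
    (hseq : Tendsto (fun n : ℕ => g ((n : ℝ) + 1) / g n) atTop (nhds 1)) :
    ∀ w > 0, Tendsto (fun x : ℝ => g (x + w) / g x) atTop (nhds 1) := by
  intro w hw
  obtain ⟨M, hconc⟩ := hconc
  have hpos_nat : ∀ᶠ n : ℕ in atTop, (0 : ℝ) < n :=
    (eventually_ge_atTop 1).mono fun n hn => by exact_mod_cast hn
  have hseq_log := (tendsto_div_nhds_one_iff_tendsto_log_sub hg
    (hpos_nat.mono fun n hn => by linarith) hpos_nat).mp hseq
  rw [tendsto_div_nhds_one_iff_tendsto_log_sub hg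
    ((eventually_gt_atTop 0).mono fun x hx => by linarith) (eventually_gt_atTop 0)]
  exact hconc.tendsto_sub_of_tendsto_nat hseq_log hw
end

section
/- Let g : ℝ⁺ → ℝ⁺ satisfy g(n+1)/g(n) → l as n → ∞ with 0 < l ≤ 1, and let f : ℝ⁺ → ℝ⁺ be eventually log-convex with f(x+1) = g(x) f(x) for all x > 0. Then for every x > 0, f(x)/f(1) = l^{(x²+x)/2} · lim_{n→∞} [g(n)⋯g(1) g(n)^x] / [g(n+x)⋯g(x)]. In particular f is uniquely determined by g and the value f(1). -/
/-! Put `φ = log ∘ f`, so that `log g(y) = Δφ(y) := φ(y+1) - φ(y)` for `y > 0`. Convexity makes these unit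
increments eventually nondecreasing, hence `g(n+1)/g(n) ≥ 1` eventually and `l = 1`; the hypothesis
on `g` then says that the second differences of `φ` at the integers tend to `0`. Up to the factor
`f(x)/f(1)`, the `n`-th term of the sequence is `exp (x Δφ(n) - (φ(n+1+x) - φ(n+1)))`, and comparing
secant slopes of `φ` squeezes this exponent between `x (Δφ(n) - Δφ(n+m+1))`, `m = ⌈x⌉`, and `0`. -/

open Filter Finset Real

theorem ConvexOn.secant_le_secant {s : Set ℝ} {φ : ℝ → ℝ} (hφ : ConvexOn ℝ s φ) {a b c d : ℝ}
    (ha : a ∈ s) (hd : d ∈ s) (hab : a < b) (hbd : b < d) (hac : a < c) (hcd : c < d) :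
    (φ b - φ a) / (b - a) ≤ (φ d - φ c) / (d - c) :=
  (hφ.secant_mono_aux2 ha hd hab hbd).trans (hφ.secant_mono_aux3 ha hd hac hcd)

theorem tendsto_sub_add_of_tendsto_sub_succ {G : Type*} [AddCommGroup G] [TopologicalSpace G]
    [IsTopologicalAddGroup G] {u : ℕ → G} (hu : Tendsto (fun n => u (n + 1) - u n) atTop (nhds 0))
    (k : ℕ) : Tendsto (fun n => u (n + k) - u n) atTop (nhds 0) := by
  induction k with
  | zero => simpa using tendsto_const_nhds
  | succ k ih =>
    simpa [← add_assoc] using (hu.comp (tendsto_add_atTop_nat k)).add ih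

section ConvexIncrements

variable {φ : ℝ → ℝ} {M : ℝ}

theorem ConvexOn.mul_increment_le (hφ : ConvexOn ℝ (Set.Ioi M) φ) {y x : ℝ} (hy : M < y)
    (hx : 0 < x) : x * (φ (y + 1) - φ y) ≤ φ (y + 1 + x) - φ (y + 1) := by
  have h := hφ.slope_mono_adjacent hy (show M < y + 1 + x by linarith) (lt_add_one y)
    (lt_add_of_pos_right _ hx)
  rw [add_sub_cancel_left, add_sub_cancel_left, div_one, le_div_iff₀ hx] at h
  linarith

theorem ConvexOn.le_mul_increment (hφ : ConvexOn ℝ (Set.Ioi M) φ) {y x c : ℝ} (hy : M < y)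
    (hx : 0 < x) (hxc : x ≤ c) : φ (y + x) - φ y ≤ x * (φ (y + c + 1) - φ (y + c)) := by
  have h := hφ.secant_le_secant hy (show M < y + c + 1 by linarith) (lt_add_of_pos_right _ hx)
    (by linarith) (lt_add_of_pos_right _ (hx.trans_le hxc)) (lt_add_one _)
  rw [add_sub_cancel_left, add_sub_cancel_left, div_one, div_le_iff₀ hx] at h
  linarith

theorem ConvexOn.tendsto_sub_sub_mul_increment (hφ : ConvexOn ℝ (Set.Ioi M) φ)
    (hΔ : Tendsto (fun n : ℕ => φ (n + 2) - 2 * φ (n + 1) + φ n) atTop (nhds 0))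
    {x : ℝ} (hx : 0 < x) :
    Tendsto (fun n : ℕ => φ (n + 1 + x) - φ (n + 1) - x * (φ (n + 1) - φ n)) atTop (nhds 0) := by
  set u : ℕ → ℝ := fun n => φ (n + 1) - φ n
  have hu : Tendsto (fun n => u (n + 1) - u n) atTop (nhds 0) :=
    hΔ.congr fun n => by simp only [u]; push_cast; ring_nf
  set m := ⌈x⌉₊
  have hupper := (tendsto_sub_add_of_tendsto_sub_succ hu (m + 1)).const_mul x
  rw [mul_zero] at hupper
  refine tendsto_of_tendsto_of_tendsto_of_le_of_le' tendsto_const_nhds hupper ?_ ?_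
  all_goals filter_upwards [tendsto_natCast_atTop_atTop.eventually_gt_atTop M] with n hn
  · linarith [hφ.mul_increment_le hn hx]
  · have h := hφ.le_mul_increment (y := n + 1) (by linarith) hx (Nat.le_ceil x)
    simp only [u]
    push_cast
    rw [show (n : ℝ) + (m + 1) = n + 1 + m by ring]
    linarith

end ConvexIncrements

section FunctionalEquation

variable {f g : ℝ → ℝ}

theorem eq_prod_range_mul_of_add_one (hfe : ∀ x > 0, f (x + 1) = g x * f x) {y : ℝ} (hy : 0 < y)
    (n : ℕ) : f (y + n) = (∏ k ∈ range n, g (y + k)) * f y := by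
  induction n with
  | zero => simp
  | succ n ih =>
    rw [prod_range_succ, Nat.cast_succ, ← add_assoc, hfe _ (by positivity), ih]
    ring

theorem eq_div_of_add_one (hf : ∀ x > 0, 0 < f x) (hfe : ∀ x > 0, f (x + 1) = g x * f x) {y : ℝ}
    (hy : 0 < y) : g y = f (y + 1) / f y := by
  rw [hfe y hy, mul_div_cancel_right₀ _ (hf y hy).ne']

theorem div_eq_exp_log_second_diff (hf : ∀ x > 0, 0 < f x)
    (hfe : ∀ x > 0, f (x + 1) = g x * f x) {y : ℝ} (hy : 0 < y) :
    g (y + 1) / g y = exp (log (f (y + 2)) - 2 * log (f (y + 1)) + log (f y)) := by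
  have h0 := hf y hy
  have h1 := hf (y + 1) (by positivity)
  have h2 := hf (y + 2) (by positivity)
  rw [eq_div_of_add_one hf hfe hy, eq_div_of_add_one hf hfe (by positivity), add_assoc,
    one_add_one_eq_two, ← exp_log (by positivity : 0 < f (y + 2) / f (y + 1) / (f (y + 1) / f y)),
    log_div (by positivity) (by positivity), log_div h2.ne' h1.ne', log_div h1.ne' h0.ne']
  ring_nf

theorem exp_neg_sub_sub_mul_sub_log {a b c x : ℝ} (ha : 0 < a) (hb : 0 < b) (hc : 0 < c) :
    exp (-(log a - log b - x * (log b - log c))) = (b / c) ^ x * b / a := by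
  rw [← exp_log (by positivity : 0 < (b / c) ^ x * b / a), log_div (by positivity) ha.ne',
    log_mul (by positivity) hb.ne', log_rpow (by positivity), log_div hb.ne' hc.ne']
  ring_nf

theorem gammaTypeSeq_eq_mul_exp (hf : ∀ x > 0, 0 < f x) (hfe : ∀ x > 0, f (x + 1) = g x * f x)
    {x : ℝ} (hx : 0 < x) {n : ℕ} (hn : 0 < n) :
    gammaTypeSeq g x n = f x / f 1 * exp (-(log (f (n + 1 + x)) - log (f (n + 1)) -
      x * (log (f (n + 1)) - log (f n)))) := by
  have hn' : (0 : ℝ) < n := Nat.cast_pos.2 hn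
  have hprod_one : ∏ k ∈ Icc 1 n, g k = f (n + 1) / f 1 := by
    rw [eq_div_iff (hf 1 one_pos).ne', add_comm, eq_prod_range_mul_of_add_one hfe one_pos,
      ← Ico_add_one_right_eq_Icc, prod_Ico_eq_prod_range]
    simp [add_comm]
  have hprod_x : ∏ k ∈ range (n + 1), g (x + k) = f (n + 1 + x) / f x := by
    rw [eq_div_iff (hf x hx).ne', add_comm _ x, ← Nat.cast_add_one,
      eq_prod_range_mul_of_add_one hfe hx]
  have hA := hf (n + 1 + x) (by positivity)
  have hB := hf (n + 1) (by positivity)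
  have hC := hf n hn'
  rw [gammaTypeSeq, hprod_one, hprod_x, eq_div_of_add_one hf hfe hn',
    exp_neg_sub_sub_mul_sub_log hA hB hC]
  have hf1 := hf 1 one_pos
  have hfx := hf x hx
  field_simp

theorem eventually_one_le_div_of_convexOn (hf : ∀ x > 0, 0 < f x)
    (hfe : ∀ x > 0, f (x + 1) = g x * f x) {M : ℝ}
    (hconv : ConvexOn ℝ (Set.Ioi M) (fun x => log (f x))) :
    ∀ᶠ n : ℕ in atTop, 1 ≤ g ((n : ℝ) + 1) / g n := by
  filter_upwards [eventually_gt_atTop 0, tendsto_natCast_atTop_atTop.eventually_gt_atTop M]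
    with n hn hnM
  have h := hconv.mul_increment_le hnM one_pos
  rw [add_assoc, one_add_one_eq_two] at h
  rw [div_eq_exp_log_second_diff hf hfe (Nat.cast_pos.2 hn)]
  exact one_le_exp (by linarith)

theorem tendsto_log_second_diff (hf : ∀ x > 0, 0 < f x) (hfe : ∀ x > 0, f (x + 1) = g x * f x)
    (hseq : Tendsto (fun n : ℕ => g ((n : ℝ) + 1) / g n) atTop (nhds 1)) :
    Tendsto (fun n : ℕ => log (f (n + 2)) - 2 * log (f (n + 1)) + log (f n)) atTop (nhds 0) := by
  have h := (continuousAt_log one_ne_zero).tendsto.comp hseq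
  rw [log_one] at h
  refine h.congr' ?_
  filter_upwards [eventually_gt_atTop 0] with n hn
  rw [Function.comp_apply, div_eq_exp_log_second_diff hf hfe (Nat.cast_pos.2 hn), log_exp]

end FunctionalEquation

theorem webster_generalized_logConvex_general (g f : ℝ → ℝ) (l : ℝ)
    (hf : ∀ x > 0, 0 < f x)
    (hl1 : l ≤ 1)
    (hseq : Tendsto (fun n : ℕ => g ((n : ℝ) + 1) / g n) atTop (nhds l))
    (hconv : ∃ M : ℝ, ConvexOn ℝ (Set.Ioi M) (fun x => Real.log (f x)))
    (hfe : ∀ x > 0, f (x + 1) = g x * f x) :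
    ∀ x > 0, Tendsto (fun n : ℕ => l ^ ((x ^ 2 + x) / 2) * gammaTypeSeq g x n)
      atTop (nhds (f x / f 1)) := by
  intro x hx
  obtain ⟨M, hM⟩ := hconv
  obtain rfl : l = 1 :=
    le_antisymm hl1 (ge_of_tendsto hseq (eventually_one_le_div_of_convexOn hf hfe hM))
  have hexp := ((continuous_exp.tendsto _).comp
    (hM.tendsto_sub_sub_mul_increment (tendsto_log_second_diff hf hfe hseq) hx).neg).const_mul
    (f x / f 1)
  rw [neg_zero, exp_zero, mul_one] at hexp
  simp only [one_rpow, one_mul]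
  refine hexp.congr' ?_
  filter_upwards [eventually_gt_atTop 0] with n hn
  exact (gammaTypeSeq_eq_mul_exp hf hfe hx hn).symm

theorem webster_generalized_logConvex (g f : ℝ → ℝ) (l : ℝ)
    (hg : ∀ x > 0, 0 < g x) (hf : ∀ x > 0, 0 < f x)
    (hl0 : 0 < l) (hl1 : l ≤ 1)
    (hseq : Tendsto (fun n : ℕ => g ((n : ℝ) + 1) / g n) atTop (nhds l))
    (hconv : ∃ M : ℝ, ConvexOn ℝ (Set.Ioi M) (fun x => Real.log (f x)))
    (hfe : ∀ x > 0, f (x + 1) = g x * f x) :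
    ∀ x > 0, Tendsto (fun n : ℕ => l ^ ((x ^ 2 + x) / 2) * gammaTypeSeq g x n)
      atTop (nhds (f x / f 1)) :=
  webster_generalized_logConvex_general g f l hf hl1 hseq hconv hfe
end

section
/- Let g : ℝ⁺ → ℝ⁺ satisfy lim_{x→∞} g(x+w)/g(x) = 1 for all w > 0. Suppose f : ℝ⁺ → ℝ⁺ satisfies f(x+1) = g(x) f(x) for x > 0, f(1) = 1, and f is eventually log-convex of order two (i.e., log f is 2-convex on some interval (M,∞)). Then f(x) = lim_{n→∞} [g(n)⋯g(1) g(n)^x] / [g(n+x)⋯g(x)] for all x > 0; in particular f is uniquely determined. -/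
open Filter Finset Real

/-- Divided difference of `h` at the points `x 0, …, x (m-1)` (assumed pairwise distinct),
via the Lagrange formula. -/
noncomputable def divDiff (h : ℝ → ℝ) {m : ℕ} (x : Fin m → ℝ) : ℝ :=
  ∑ i, h (x i) / ∏ j ∈ Finset.univ.erase i, (x i - x j)

/-- `h` is convex of order `n` on `I` : all divided differences at `n+2` increasing
points of `I` are nonnegative. -/
def NConvexOn (n : ℕ) (I : Set ℝ) (h : ℝ → ℝ) : Prop :=
  ∀ x : Fin (n + 2) → ℝ, StrictMono x → (∀ i, x i ∈ I) → 0 ≤ divDiff h x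

/-- `h` is concave of order `n` on `I` if `-h` is convex of order `n` on `I`. -/
def NConcaveOn (n : ℕ) (I : Set ℝ) (h : ℝ → ℝ) : Prop :=
  NConvexOn n I (fun t => -h t)

/-!
Write `F = log f` and `G = log g`, so that `F (y + 1) - F y = G y`. The logarithm of
`gammaTypeSeq g x (n + 1)` telescopes to `F x` minus the interpolation error
`E y = F (y + x) - F y - x * (F (y + 1) - F y)` at `y = n + 1`, up to `x * (G (n + 1) - G n) → 0`.
For `0 < x < 1`, nonnegativity of the third divided differences of `F` at `n - 1, n, n + x, n + 1`
and at `n, n + x, n + 1, n + 2` squeezes `E n` between `x (1 - x) / 2` times the second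
differences `G n - G (n + 1)` and `G (n - 1) - G n`, which tend to `0` because
`g (x + w) / g x → 1`. The functional equation carries the limit to every `x > 0`.
-/

open Topology

lemma divDiff_fin_four (h : ℝ → ℝ) (a b c d : ℝ) :
    divDiff h ![a, b, c, d] =
      h a / ((a - b) * ((a - c) * (a - d))) + (h b / ((b - a) * ((b - c) * (b - d))) +
        (h c / ((c - a) * ((c - b) * (c - d))) + h d / ((d - a) * ((d - b) * (d - c))))) := by
  have e0 : univ.erase (0 : Fin 4) = {1, 2, 3} := by decide
  have e1 : univ.erase (1 : Fin 4) = {0, 2, 3} := by decide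
  have e2 : univ.erase (2 : Fin 4) = {0, 1, 3} := by decide
  have e3 : univ.erase (3 : Fin 4) = {0, 1, 2} := by decide
  simp [divDiff, Fin.sum_univ_four, e0, e1, e2, e3]
  ring

lemma sub_sub_mul_le_of_divDiff_nonneg (F : ℝ → ℝ) {y x : ℝ} (hx0 : 0 < x) (hx1 : x < 1)
    (h : 0 ≤ divDiff F ![y - 1, y, y + x, y + 1]) :
    F (y + x) - F y - x * (F (y + 1) - F y) ≤
      x * (1 - x) / 2 * ((F y - F (y - 1)) - (F (y + 1) - F y)) := by
  have hpos : 0 < 2 * x * (1 - x) * (1 + x) := by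
    have : 0 < 1 - x := by linarith
    positivity
  have key : divDiff F ![y - 1, y, y + x, y + 1] * (2 * x * (1 - x) * (1 + x)) =
      -(x * (1 - x)) * F (y - 1) + 2 * (1 - x ^ 2) * F y - 2 * F (y + x)
        + x * (1 + x) * F (y + 1) := by
    have : 1 - x ≠ 0 := by linarith
    rw [divDiff_fin_four,
      show (y - 1 - y) * ((y - 1 - (y + x)) * (y - 1 - (y + 1))) = -(2 * (1 + x)) by ring,
      show (y - (y - 1)) * ((y - (y + x)) * (y - (y + 1))) = x by ring,
      show (y + x - (y - 1)) * ((y + x - y) * (y + x - (y + 1))) = -((1 + x) * (x * (1 - x)))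
        by ring,
      show (y + 1 - (y - 1)) * ((y + 1 - y) * (y + 1 - (y + x))) = 2 * (1 - x) by ring]
    field_simp
    ring
  nlinarith [mul_nonneg h hpos.le]

lemma le_sub_sub_mul_of_divDiff_nonneg (F : ℝ → ℝ) {y x : ℝ} (hx0 : 0 < x) (hx1 : x < 1)
    (h : 0 ≤ divDiff F ![y, y + x, y + 1, y + 2]) :
    x * (1 - x) / 2 * ((F (y + 1) - F y) - (F (y + 2) - F (y + 1))) ≤
      F (y + x) - F y - x * (F (y + 1) - F y) := by
  have hpos : 0 < 2 * x * (1 - x) * (2 - x) := by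
    have : 0 < 1 - x := by linarith
    have : 0 < 2 - x := by linarith
    positivity
  have key : divDiff F ![y, y + x, y + 1, y + 2] * (2 * x * (1 - x) * (2 - x)) =
      -((1 - x) * (2 - x)) * F y + 2 * F (y + x) - 2 * (x * (2 - x)) * F (y + 1)
        + x * (1 - x) * F (y + 2) := by
    have : 1 - x ≠ 0 := by linarith
    have : 2 - x ≠ 0 := by linarith
    rw [divDiff_fin_four,
      show (y - (y + x)) * ((y - (y + 1)) * (y - (y + 2))) = -(2 * x) by ring,
      show (y + x - y) * ((y + x - (y + 1)) * (y + x - (y + 2))) = x * ((1 - x) * (2 - x)) by ring,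
      show (y + 1 - y) * ((y + 1 - (y + x)) * (y + 1 - (y + 2))) = -(1 - x) by ring,
      show (y + 2 - y) * ((y + 2 - (y + x)) * (y + 2 - (y + 1))) = 2 * (2 - x) by ring]
    field_simp
    ring
  nlinarith [mul_nonneg h hpos.le]

lemma strictMono_vecCons_four {a b c d : ℝ} (hab : a < b) (hbc : b < c) (hcd : c < d) :
    StrictMono ![a, b, c, d] := by
  intro i j hij
  fin_cases i <;> fin_cases j <;> simp_all <;> linarith

lemma tendsto_log_comp_add_sub_log {g : ℝ → ℝ} (hg : ∀ x > 0, 0 < g x) {w : ℝ}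
    (hw : Tendsto (fun x => g (x + w) / g x) atTop (𝓝 1)) :
    Tendsto (fun x => log (g (x + w)) - log (g x)) atTop (𝓝 0) := by
  have hlog := (continuousAt_log one_ne_zero).tendsto.comp hw
  rw [log_one] at hlog
  refine hlog.congr' ?_
  filter_upwards [eventually_gt_atTop |w|] with x hx
  have hx0 : 0 < x := (abs_nonneg w).trans_lt hx
  have hxw : 0 < x + w := by linarith [neg_abs_le w]
  exact log_div (hg _ hxw).ne' (hg _ hx0).ne'

lemma gammaTypeSeq_eq_exp {g : ℝ → ℝ} (hg : ∀ x > 0, 0 < g x) {x : ℝ} (hx : 0 < x) {n : ℕ}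
    (hn : 0 < n) :
    gammaTypeSeq g x n = exp (∑ k ∈ Icc 1 n, log (g k) + x * log (g n) -
      ∑ k ∈ range (n + 1), log (g (x + k))) := by
  rw [gammaTypeSeq, exp_sub, exp_add, exp_sum, exp_sum, mul_comm x,
    ← rpow_def_of_pos (hg _ (by positivity))]
  congr 2
  · exact prod_congr rfl fun k hk => (exp_log (hg _ (by exact_mod_cast (mem_Icc.mp hk).1))).symm
  · funext k
    exact (exp_log (hg _ (by positivity))).symm

section FunctionalEquation

variable {F G : ℝ → ℝ}

lemma sum_range_eq_sub_of_add_one (hFG : ∀ y > 0, F (y + 1) = G y + F y) {x : ℝ} (hx : 0 < x)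
    (n : ℕ) : ∑ k ∈ range n, G (x + k) = F (x + n) - F x := by
  calc ∑ k ∈ range n, G (x + k) = ∑ k ∈ range n, (F (x + (k + 1 : ℕ)) - F (x + k)) := by
        refine sum_congr rfl fun k _ => ?_
        rw [Nat.cast_succ, ← add_assoc, hFG _ (by positivity)]
        ring
    _ = F (x + n) - F x := by
        rw [sum_range_sub (fun k : ℕ => F (x + k))]
        simp

lemma tendsto_sub_sub_mul_of_lt_one (hFG : ∀ y > 0, F (y + 1) = G y + F y) {M : ℝ}
    (hF : NConvexOn 2 (Set.Ioi M) F) (hG : Tendsto (fun n : ℕ => G n - G (n + 1)) atTop (𝓝 0))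
    {x : ℝ} (hx0 : 0 < x) (hx1 : x < 1) :
    Tendsto (fun n : ℕ => F (n + x) - F n - x * G n) atTop (𝓝 0) := by
  have hlow : Tendsto (fun n : ℕ => x * (1 - x) / 2 * (G n - G (n + 1))) atTop (𝓝 0) := by
    simpa using hG.const_mul (x * (1 - x) / 2)
  have hup : Tendsto (fun n : ℕ => x * (1 - x) / 2 * (G (n - 1) - G n)) atTop (𝓝 0) := by
    rw [← tendsto_add_atTop_iff_nat 1]
    simpa using hlow
  have hcast := tendsto_natCast_atTop_atTop (R := ℝ)
  refine tendsto_of_tendsto_of_tendsto_of_le_of_le' hlow hup ?_ ?_ <;>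
    filter_upwards [hcast.eventually_gt_atTop (M + 1), hcast.eventually_gt_atTop 1] with n hnM hn1
  · have h := le_sub_sub_mul_of_divDiff_nonneg F (y := n) hx0 hx1 (hF _
      (strictMono_vecCons_four (by linarith) (by linarith) (by linarith))
      (by intro i; fin_cases i <;> simp <;> linarith))
    have e1 : F (n + 1) - F n = G n := by rw [hFG _ (by linarith)]; ring
    have e2 : F (n + 2) - F (n + 1) = G (n + 1) := by
      rw [show (n : ℝ) + 2 = n + 1 + 1 by ring, hFG _ (by linarith)]; ring
    rw [e1, e2] at h
    linarith
  · have h := sub_sub_mul_le_of_divDiff_nonneg F (y := n) hx0 hx1 (hF _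
      (strictMono_vecCons_four (by linarith) (by linarith) (by linarith))
      (by intro i; fin_cases i <;> simp <;> linarith))
    have e1 : F (n + 1) - F n = G n := by rw [hFG _ (by linarith)]; ring
    have e2 : F n - F (n - 1) = G (n - 1) := by
      have := hFG (n - 1) (by linarith)
      rw [sub_add_cancel] at this
      linarith
    rw [e1, e2] at h
    linarith

lemma tendsto_sub_sub_mul (hFG : ∀ y > 0, F (y + 1) = G y + F y) {M : ℝ}
    (hF : NConvexOn 2 (Set.Ioi M) F)
    (hG : ∀ w > 0, Tendsto (fun n : ℕ => G (n + w) - G n) atTop (𝓝 0)) {x : ℝ} (hx : 0 < x) :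
    Tendsto (fun n : ℕ => F (n + x) - F n - x * G n) atTop (𝓝 0) := by
  have hG1 : Tendsto (fun n : ℕ => G n - G (n + 1)) atTop (𝓝 0) := by
    simpa using (hG 1 one_pos).neg
  suffices ∀ m : ℕ, ∀ x : ℝ, 0 < x → x ≤ m →
      Tendsto (fun n : ℕ => F (n + x) - F n - x * G n) atTop (𝓝 0) from this _ x hx (Nat.le_ceil x)
  intro m
  induction m with
  | zero => intro x hx hx0; simp at hx0; linarith
  | succ m ih =>
    intro x hx hxm
    rcases lt_trichotomy x 1 with hlt | rfl | hgt
    · exact tendsto_sub_sub_mul_of_lt_one hFG hF hG1 hx hlt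
    · refine tendsto_const_nhds.congr' ?_
      filter_upwards [eventually_gt_atTop 0] with n hn
      rw [hFG _ (by positivity)]
      ring
    · have hstep := (ih (x - 1) (by linarith) (by push_cast at hxm; linarith)).add
        (hG (x - 1) (by linarith))
      rw [add_zero] at hstep
      refine hstep.congr fun n => ?_
      rw [show (n : ℝ) + x = n + (x - 1) + 1 by ring, hFG _ (by positivity)]
      ring

end FunctionalEquation

theorem uniqueness_of_second_order_logConvex_solution (g f : ℝ → ℝ)
    (hg : ∀ x > 0, 0 < g x) (hf : ∀ x > 0, 0 < f x)
    (hasym : ∀ w > 0, Tendsto (fun x : ℝ => g (x + w) / g x) atTop (nhds 1))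
    (hconv2 : ∃ M : ℝ, NConvexOn 2 (Set.Ioi M) (fun x => Real.log (f x)))
    (hfe : ∀ x > 0, f (x + 1) = g x * f x)
    (hf1 : f 1 = 1) :
    ∀ x > 0, Tendsto (gammaTypeSeq g x) atTop (nhds (f x)) := by
  obtain ⟨M, hM⟩ := hconv2
  set F := fun x => log (f x)
  set G := fun x => log (g x)
  have hFG : ∀ y > 0, F (y + 1) = G y + F y := fun y hy => by
    simp only [F, G, hfe y hy]
    exact log_mul (hg y hy).ne' (hf y hy).ne'
  have hG : ∀ w > 0, Tendsto (fun n : ℕ => G (n + w) - G n) atTop (𝓝 0) := fun w hw =>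
    (tendsto_log_comp_add_sub_log hg (hasym w hw)).comp tendsto_natCast_atTop_atTop
  intro x hx
  have hlim : Tendsto (fun n : ℕ => F x - (F ((n + 1 : ℕ) + x) - F (n + 1 : ℕ) - x * G (n + 1 : ℕ))
      - x * (G (n + 1) - G n)) atTop (𝓝 (F x)) := by
    simpa using (((tendsto_sub_sub_mul hFG hM hG hx).comp (tendsto_add_atTop_nat 1)).const_sub
      (F x)).sub ((hG 1 one_pos).const_mul x)
  rw [← exp_log (hf x hx)]
  refine ((continuous_exp.tendsto _).comp hlim).congr' ?_
  filter_upwards [eventually_gt_atTop 0] with n hn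
  have hIcc : ∑ k ∈ Icc 1 n, G k = F (1 + n) - F 1 := by
    rw [← Ico_add_one_right_eq_Icc, sum_Ico_eq_sum_range, Nat.add_sub_cancel]
    push_cast
    exact sum_range_eq_sub_of_add_one hFG one_pos n
  rw [Function.comp_apply, gammaTypeSeq_eq_exp hg hx hn, hIcc, sum_range_eq_sub_of_add_one hFG hx]
  simp only [F, G, hf1, log_one]
  push_cast
  ring_nf
end

section
/- Let f : D → ℝ with ℕ* ⊆ D and suppose f is limit summable with limit summand function f_σ (i.e., f_{σ_n}(x) = x f(n) + ∑_{k=1}^n (f(k) − f(x+k)) converges to f_σ(x) for all x in Σ_f, with R(f,1) = lim (f(n) − f(1+n)) = 0 and D ⊆ D−1). Then f_σ(x) = f(x) + f_σ(x−1) for all x ∈ D, and f_σ(m) = ∑_{j=1}^m f(j) for every positive integer m. -/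
/-! The partial sums `f_{σ_n}(x)` and `f_{σ_n}(x - 1)` differ by `f x + (f n - f (x + n))`, since the
sums telescope. Convergence of `f_{σ_n}(x)` together with `f (n + 1) - f n → 0` forces
`f n - f (x + n) → 0`, so the difference equation follows in the limit; the values at positive
integers then come from `f_σ(0) = 0` by induction. -/

open Filter Finset Real

namespace LimitSummable

/-- The paper's `f_{σ_n}(x)`. -/
noncomputable def partialSum (f : ℝ → ℝ) (x : ℝ) (n : ℕ) : ℝ :=
  x * f n + ∑ k ∈ Icc 1 n, (f k - f (x + k))

variable {f : ℝ → ℝ}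

lemma partialSum_succ_sub (x : ℝ) (n : ℕ) :
    partialSum f x (n + 1) - partialSum f x n =
      x * (f (n + 1) - f n) + (f (n + 1) - f (x + (n + 1))) := by
  simp only [partialSum, sum_Icc_succ_top (Nat.le_add_left 1 n)]
  push_cast
  ring

lemma sum_Icc_shift_sub_telescope (x : ℝ) (n : ℕ) :
    ∑ k ∈ Icc 1 n, (f (x - 1 + k) - f (x + k)) = f x - f (x + n) := by
  induction n with
  | zero => simp
  | succ n ih =>
    rw [sum_Icc_succ_top (Nat.le_add_left 1 n), ih]
    push_cast
    ring_nf

lemma partialSum_sub_partialSum_sub_one (x : ℝ) (n : ℕ) :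
    partialSum f x n - partialSum f (x - 1) n = f x + (f n - f (x + n)) := by
  have hsums : ∑ k ∈ Icc 1 n, (f k - f (x + k)) - ∑ k ∈ Icc 1 n, (f k - f (x - 1 + k)) =
      ∑ k ∈ Icc 1 n, (f (x - 1 + k) - f (x + k)) := by
    rw [← sum_sub_distrib]
    exact sum_congr rfl fun _ _ => by ring
  simp only [partialSum]
  linear_combination hsums + sum_Icc_shift_sub_telescope x n

lemma tendsto_sub_shift_of_tendsto_partialSum {x L : ℝ}
    (hx : Tendsto (partialSum f x) atTop (nhds L))
    (hf : Tendsto (fun n : ℕ => f (n + 1) - f n) atTop (nhds 0)) :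
    Tendsto (fun n : ℕ => f n - f (x + n)) atTop (nhds 0) := by
  have hdiff : Tendsto (fun n => partialSum f x (n + 1) - partialSum f x n) atTop (nhds 0) := by
    simpa using (hx.comp (tendsto_add_atTop_nat 1)).sub hx
  have hshift : Tendsto (fun n : ℕ => f (n + 1) - f (x + (n + 1))) atTop (nhds 0) := by
    simpa [partialSum_succ_sub] using hdiff.sub (hf.const_mul x)
  refine (tendsto_add_atTop_iff_nat 1).mp (hshift.congr fun n => ?_)
  push_cast
  rfl

lemma eq_add_of_tendsto_partialSum {x a b : ℝ}
    (ha : Tendsto (partialSum f x) atTop (nhds a))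
    (hb : Tendsto (partialSum f (x - 1)) atTop (nhds b))
    (hf : Tendsto (fun n : ℕ => f (n + 1) - f n) atTop (nhds 0)) :
    a = f x + b := by
  have hlim : Tendsto (fun n : ℕ => f x + (f n - f (x + n))) atTop (nhds (a - b)) := by
    simpa only [partialSum_sub_partialSum_sub_one] using ha.sub hb
  have hconst := (tendsto_sub_shift_of_tendsto_partialSum ha hf).const_add (f x)
  rw [add_zero] at hconst
  linarith [tendsto_nhds_unique hlim hconst]

end LimitSummable

open LimitSummable in
theorem limit_summand_difference_equation (D : Set ℝ) (f fσ : ℝ → ℝ)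
    (hND : ∀ n : ℕ, 1 ≤ n → ((n : ℝ)) ∈ D)
    (hD1 : ∀ x ∈ D, x + 1 ∈ D)
    (hsum : ∀ x : ℝ, (∀ n : ℕ, 1 ≤ n → x + (n : ℝ) ∈ D) →
      Tendsto (fun n : ℕ => x * f n + ∑ k ∈ Finset.Icc 1 n, (f k - f (x + k)))
        atTop (nhds (fσ x)))
    (hR1 : Tendsto (fun n : ℕ => f n - f (1 + n)) atTop (nhds 0)) :
    (∀ x ∈ D, fσ x = f x + fσ (x - 1)) ∧
    (∀ m : ℕ, 1 ≤ m → fσ m = ∑ j ∈ Finset.Icc 1 m, f j) := by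
  have hf : Tendsto (fun n : ℕ => f (n + 1) - f n) atTop (nhds 0) := by
    simpa [add_comm] using hR1.neg
  have hD : ∀ x ∈ D, ∀ n : ℕ, x + n ∈ D := fun x hx n => by
    induction n with
    | zero => simpa using hx
    | succ n ih => simpa [add_assoc] using hD1 _ ih
  have hrec : ∀ x ∈ D, fσ x = f x + fσ (x - 1) := fun x hx =>
    eq_add_of_tendsto_partialSum (hsum x fun n _ => hD x hx n)
      (hsum (x - 1) fun n hn => by
        obtain ⟨k, rfl⟩ := Nat.exists_eq_add_of_le' hn
        convert hD x hx k using 1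
        push_cast
        ring) hf
  have hzero : fσ 0 = 0 :=
    tendsto_nhds_unique (hsum 0 fun n hn => by simpa using hND n hn) (by simp)
  refine ⟨hrec, fun m hm => ?_⟩
  induction m, hm using Nat.le_induction with
  | base => simpa [hzero] using hrec 1 (by exact_mod_cast hND 1 le_rfl)
  | succ m hm ih =>
    rw [sum_Icc_succ_top (by omega), ← ih, hrec _ (hND (m + 1) (by omega))]
    push_cast
    simp [add_comm]
end

section
/- Let 0 < b ≠ 1 and 0 < a < 1, and define f(x) = aˣ + log_b x on (0,∞). Then f is limit summable and its limit summand function is f_σ(x) = (a/(a−1))(aˣ − 1) + log_b Γ(x+1), i.e., for every x > 0 the sequence f_{σ_n}(x) = x f(n) + ∑_{k=1}^n (f(k) − f(x+k)) converges to (a/(a−1))(aˣ − 1) + log_b Γ(x+1). -/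
open Filter Finset Real

open scoped Nat

/-!
The sequence `f_{σ_n}(x)` is additive in `f` and commutes with division by a constant, so the
two summands of `f` can be treated separately. For `f = a ^ ·` the sum is `(1 - a ^ x)` times a
geometric sum, which converges since `a ^ n → 0`. For `f = log` the sum is
`log (x * GammaSeq x n)`, and the Gauss limit `x * GammaSeq x n → x * Γ(x) = Γ(x + 1)` finishes
by continuity of `log`.
-/

/-- The paper's `f_{σ_n}(x)`. -/
def limitSummandSeq (f : ℝ → ℝ) (x : ℝ) (n : ℕ) : ℝ :=
  x * f n + ∑ k ∈ Icc 1 n, (f k - f (x + k))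

section limitSummandSeq

variable (f g : ℝ → ℝ) (x : ℝ) (n : ℕ)

theorem limitSummandSeq_add :
    limitSummandSeq (fun t => f t + g t) x n = limitSummandSeq f x n + limitSummandSeq g x n := by
  simp only [limitSummandSeq, add_sub_add_comm, sum_add_distrib, mul_add]
  abel

theorem limitSummandSeq_div_const (c : ℝ) :
    limitSummandSeq (fun t => f t / c) x n = limitSummandSeq f x n / c := by
  simp only [limitSummandSeq, sum_div, add_div, mul_div_assoc, sub_div]

end limitSummandSeq

theorem geom_sum_Icc_one {a : ℝ} (ha : a ≠ 1) (n : ℕ) :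
    ∑ k ∈ Icc 1 n, a ^ k = (a ^ (n + 1) - a) / (a - 1) := by
  rw [← Ico_add_one_right_eq_Icc, geom_sum_Ico ha (by omega), pow_one]

theorem limitSummandSeq_rpow {a : ℝ} (ha : 0 < a) (x : ℝ) (n : ℕ) :
    limitSummandSeq (a ^ ·) x n = x * a ^ n + (1 - a ^ x) * ∑ k ∈ Icc 1 n, a ^ k := by
  simp only [limitSummandSeq, mul_sum, rpow_natCast, rpow_add ha]
  congr 1
  exact sum_congr rfl fun k _ => by ring

theorem tendsto_limitSummandSeq_rpow {a : ℝ} (ha0 : 0 < a) (ha1 : a < 1) (x : ℝ) :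
    Tendsto (limitSummandSeq (a ^ ·) x) atTop (nhds (a / (a - 1) * (a ^ x - 1))) := by
  have hpow : Tendsto (fun n : ℕ => a ^ n) atTop (nhds 0) :=
    tendsto_pow_atTop_nhds_zero_of_lt_one ha0.le ha1
  have hgeom : Tendsto (fun n : ℕ => (a ^ (n + 1) - a) / (a - 1)) atTop
      (nhds ((0 - a) / (a - 1))) :=
    ((hpow.comp (tendsto_add_atTop_nat 1)).sub_const a).div_const _
  convert (hpow.const_mul x).add (hgeom.const_mul (1 - a ^ x)) using 1
  · ext n
    rw [limitSummandSeq_rpow ha0, geom_sum_Icc_one ha1.ne]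
  · have : a - 1 ≠ 0 := sub_ne_zero.mpr ha1.ne
    congr 1
    field_simp
    ring

theorem prod_range_succ_add_eq_mul_prod_Icc (x : ℝ) (n : ℕ) :
    ∏ j ∈ range (n + 1), (x + j) = x * ∏ k ∈ Icc 1 n, (x + k) := by
  rw [prod_range_succ', ← Ico_add_one_right_eq_Icc, prod_Ico_eq_prod_range, mul_comm]
  simp [add_comm 1]

theorem mul_GammaSeq {x : ℝ} (hx : x ≠ 0) (n : ℕ) :
    x * GammaSeq x n = n ^ x * n ! / ∏ k ∈ Icc 1 n, (x + k) := by
  rw [GammaSeq, prod_range_succ_add_eq_mul_prod_Icc, mul_div_assoc', mul_div_mul_left _ _ hx]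

theorem log_factorial (n : ℕ) : log (n ! : ℝ) = ∑ k ∈ Icc 1 n, log k := by
  rw [← prod_Ico_id_eq_factorial, Ico_add_one_right_eq_Icc, Nat.cast_prod]
  exact log_prod fun k hk => Nat.cast_ne_zero.mpr (Nat.one_le_iff_ne_zero.mp (mem_Icc.mp hk).1)

theorem limitSummandSeq_log {x : ℝ} (hx : 0 < x) {n : ℕ} (hn : n ≠ 0) :
    limitSummandSeq log x n = log (x * GammaSeq x n) := by
  have hprod : ∏ k ∈ Icc 1 n, (x + k) ≠ 0 := prod_ne_zero_iff.mpr fun k _ => by positivity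
  rw [mul_GammaSeq hx.ne', log_div (by positivity) hprod, log_mul (by positivity) (by positivity),
    log_rpow (by positivity), log_factorial, log_prod fun k _ => by positivity, limitSummandSeq,
    sum_sub_distrib]
  ring

theorem tendsto_limitSummandSeq_log {x : ℝ} (hx : 0 < x) :
    Tendsto (limitSummandSeq log x) atTop (nhds (log (Gamma (x + 1)))) := by
  rw [Gamma_add_one hx.ne']
  refine (((GammaSeq_tendsto_Gamma x).const_mul x).log ?_).congr' ?_
  · exact mul_ne_zero hx.ne' (Gamma_pos_of_pos hx).ne'
  · filter_upwards [eventually_ne_atTop 0] with n hn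
    exact (limitSummandSeq_log hx hn).symm

theorem limit_summable_exp_add_logb_general (a b : ℝ)
    (ha0 : 0 < a) (ha1 : a < 1) :
    ∀ x > (0 : ℝ),
      Tendsto (fun n : ℕ =>
          x * (a ^ (n : ℝ) + Real.logb b n) +
            ∑ k ∈ Finset.Icc 1 n,
              ((a ^ (k : ℝ) + Real.logb b k) - (a ^ (x + k) + Real.logb b (x + k))))
        atTop
        (nhds (a / (a - 1) * (a ^ x - 1) + Real.logb b (Real.Gamma (x + 1)))) := by
  intro x hx
  have h := (tendsto_limitSummandSeq_rpow ha0 ha1 x).add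
    ((tendsto_limitSummandSeq_log hx).div_const (log b))
  simp only [← limitSummandSeq_div_const, ← limitSummandSeq_add] at h
  -- `logb b t` unfolds to `log t / log b`
  exact h

theorem limit_summable_exp_add_logb (a b : ℝ)
    (ha0 : 0 < a) (ha1 : a < 1) (hb0 : 0 < b) (hb1 : b ≠ 1) :
    ∀ x > (0 : ℝ),
      Tendsto (fun n : ℕ =>
          x * (a ^ (n : ℝ) + Real.logb b n) +
            ∑ k ∈ Finset.Icc 1 n,
              ((a ^ (k : ℝ) + Real.logb b k) - (a ^ (x + k) + Real.logb b (x + k))))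
        atTop
        (nhds (a / (a - 1) * (a ^ x - 1) + Real.logb b (Real.Gamma (x + 1)))) :=
  limit_summable_exp_add_logb_general a b ha0 ha1
end

section
/- Let g : ℝ⁺ → ℝ⁺ with g(n+1)/g(n) → l, 0 < l ≤ 1, and f : ℝ⁺ → ℝ⁺ eventually log-convex with f(x+1) = g(x) f(x). Then there exists a constant c > 0 such that f(x+1) = c · l^{(x²+x)/2} · exp((log g)_σ(x)) for all x > 0, where (log g)_σ(x) = lim_{n→∞} [x log g(n) + ∑_{k=1}^n (log g(k) − log g(x+k))]. -/
/-!
Convexity of `log f` on `(M, ∞)` makes its unit increments `Δ log f = log g` eventually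
nondecreasing, so `g (n + 1) / g n ≥ 1` for large `n`, which forces `l = 1`. The partial
sums of the limit summand telescope to
`x log g(n) - (log f(n+1+x) - log f(n+1)) + log f(x+1) - log f(1)`,
and comparing slopes of `log f` on `[n, n+1]`, `[n+1, n+1+x]` and `[n+⌈x⌉, n+⌈x⌉+1]`
squeezes the bracket between `x log g(n)` and `x log g(n+⌈x⌉)`. As
`log g(n+1) - log g(n) → log l = 0`, the limit is `log f(x+1) - log f(1)`, so `c = f 1`.
-/

open Filter Finset Real Topology
open scoped fwdDiff

theorem ConvexOn.slope_le_slope {𝕜 : Type*} [Field 𝕜] [LinearOrder 𝕜] [IsStrictOrderedRing 𝕜]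
    {s : Set 𝕜} {f : 𝕜 → 𝕜} (hf : ConvexOn 𝕜 s f) {a b c d : 𝕜} (ha : a ∈ s) (hb : b ∈ s)
    (hc : c ∈ s) (hd : d ∈ s) (hab : a < b) (hcd : c < d) (hac : a ≤ c) (hbd : b ≤ d) :
    slope f a b ≤ slope f c d :=
  calc slope f a b ≤ slope f a d :=
        hf.slope_mono ha ⟨hb, hab.ne'⟩ ⟨hd, (hab.trans_le hbd).ne'⟩ hbd
    _ = slope f d a := slope_comm f a d
    _ ≤ slope f d c := hf.slope_mono hd ⟨ha, (hab.trans_le hbd).ne⟩ ⟨hc, hcd.ne⟩ hac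
    _ = slope f c d := slope_comm f d c

theorem tendsto_add_nat_sub_of_tendsto_succ_sub {G : Type*} [AddCommGroup G] [TopologicalSpace G]
    [IsTopologicalAddGroup G] {u : ℕ → G} (hu : Tendsto (fun n => u (n + 1) - u n) atTop (𝓝 0))
    (m : ℕ) : Tendsto (fun n => u (n + m) - u n) atTop (𝓝 0) := by
  induction m with
  | zero => simpa using tendsto_const_nhds
  | succ m ih => simpa [← add_assoc] using (hu.comp (tendsto_add_atTop_nat m)).add ih

theorem sum_Icc_fwdDiff_sub_fwdDiff_add (h : ℝ → ℝ) (x : ℝ) (n : ℕ) :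
    ∑ k ∈ Icc 1 n, (Δ_[1] h k - Δ_[1] h (x + k)) =
      (h (n + 1) - h (x + n + 1)) - (h 1 - h (x + 1)) := by
  induction n with
  | zero => simp
  | succ n ih =>
    rw [sum_Icc_succ_top (by omega), ih]
    simp only [fwdDiff, Nat.cast_add, Nat.cast_one]
    ring_nf

namespace ConvexOn

open Set

variable {h : ℝ → ℝ} {M : ℝ}

theorem monotoneOn_fwdDiff (hh : ConvexOn ℝ (Ioi M) h) : MonotoneOn (Δ_[1] h) (Ioi M) := by
  intro s (hs : M < s) t (ht : M < t) hst
  have := hh.slope_le_slope hs (by linarith : M < s + 1) ht (by linarith : M < t + 1)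
    (lt_add_one s) (lt_add_one t) hst (by linarith)
  rwa [slope_def_field, slope_def_field, add_sub_cancel_left, add_sub_cancel_left, div_one,
    div_one] at this

theorem mul_fwdDiff_le (hh : ConvexOn ℝ (Ioi M) h) {t x : ℝ} (ht : M < t) (hx : 0 < x) :
    x * Δ_[1] h t ≤ h (t + 1 + x) - h (t + 1) := by
  have := hh.slope_le_slope (b := t + 1) (c := t + 1) (d := t + 1 + x) ht (by linarith : M < _)
    (by linarith : M < _) (by linarith : M < _) (lt_add_one t) (lt_add_of_pos_right _ hx)
    (by linarith) (by linarith)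
  rwa [slope_def_field, slope_def_field, add_sub_cancel_left, add_sub_cancel_left, div_one,
    le_div_iff₀ hx, mul_comm] at this

theorem sub_le_mul_fwdDiff (hh : ConvexOn ℝ (Ioi M) h) {t x s : ℝ} (ht : M < t) (hx : 0 < x)
    (hxs : x ≤ s) (hs : 1 ≤ s) :
    h (t + 1 + x) - h (t + 1) ≤ x * Δ_[1] h (t + s) := by
  have := hh.slope_le_slope (a := t + 1) (c := t + s) (by linarith : M < _)
    (by linarith : M < _) (by linarith : M < _) (by linarith : M < _)
    (lt_add_of_pos_right _ hx) (lt_add_one _) (by linarith) (by linarith)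
  rwa [slope_def_field, slope_def_field, add_sub_cancel_left, add_sub_cancel_left, div_one,
    div_le_iff₀ hx, mul_comm] at this

theorem tendsto_mul_fwdDiff_sub (hh : ConvexOn ℝ (Ioi M) h)
    (hd : Tendsto (fun n : ℕ => Δ_[1] h (n + 1) - Δ_[1] h n) atTop (𝓝 0)) {x : ℝ} (hx : 0 < x) :
    Tendsto (fun n : ℕ => x * Δ_[1] h n - (h (n + 1 + x) - h (n + 1))) atTop (𝓝 0) := by
  set m := ⌈x⌉₊
  have hshift : Tendsto (fun n : ℕ => x * Δ_[1] h (n + m) - x * Δ_[1] h n) atTop (𝓝 0) := by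
    have := (tendsto_add_nat_sub_of_tendsto_succ_sub (u := fun n : ℕ => Δ_[1] h n)
      (by simpa using hd) m).const_mul x
    simpa [mul_sub] using this
  have hM : ∀ᶠ n : ℕ in atTop, M < n := tendsto_natCast_atTop_atTop.eventually_gt_atTop M
  refine tendsto_of_tendsto_of_tendsto_of_le_of_le' (by simpa using hshift.neg) tendsto_const_nhds
    ?_ ?_
  · filter_upwards [hM] with n hn
    have := hh.sub_le_mul_fwdDiff hn hx (Nat.le_ceil x) (Nat.one_le_cast.2 (Nat.ceil_pos.2 hx))
    linarith
  · filter_upwards [hM] with n hn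
    linarith [hh.mul_fwdDiff_le hn hx]

end ConvexOn

theorem solution_via_limit_summand_general (g f : ℝ → ℝ) (l : ℝ)
    (hf : ∀ x > 0, 0 < f x)
    (hl1 : l ≤ 1)
    (hseq : Tendsto (fun n : ℕ => g ((n : ℝ) + 1) / g n) atTop (nhds l))
    (hconv : ∃ M : ℝ, ConvexOn ℝ (Set.Ioi M) (fun x => Real.log (f x)))
    (hfe : ∀ x > 0, f (x + 1) = g x * f x) :
    ∃ c > 0, ∀ x > 0, ∃ L : ℝ,
      Tendsto (fun n : ℕ =>
          x * Real.log (g n) +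
            ∑ k ∈ Finset.Icc 1 n, (Real.log (g k) - Real.log (g (x + k))))
        atTop (nhds L) ∧
      f (x + 1) = c * l ^ ((x ^ 2 + x) / 2) * Real.exp L := by
  obtain ⟨M, hconv⟩ := hconv
  set F : ℝ → ℝ := fun x => log (f x)
  have hg : ∀ t > 0, g t = exp (Δ_[1] F t) := fun t ht => by
    rw [fwdDiff, exp_sub, exp_log (hf _ (by linarith)), exp_log (hf t ht), hfe t ht,
      mul_div_cancel_right₀ _ (hf t ht).ne']
  have hratio : ∀ᶠ n : ℕ in atTop, g (n + 1) / g n = exp (Δ_[1] F (n + 1) - Δ_[1] F n) := by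
    filter_upwards [eventually_gt_atTop 0] with n hn
    rw [hg n (Nat.cast_pos.2 hn), hg (n + 1) (by positivity), ← exp_sub]
  have hl : l = 1 := by
    refine le_antisymm hl1 (ge_of_tendsto hseq ?_)
    filter_upwards [hratio, tendsto_natCast_atTop_atTop.eventually_gt_atTop M] with n hn hnM
    rw [hn, one_le_exp_iff, sub_nonneg]
    exact hconv.monotoneOn_fwdDiff hnM (lt_add_of_lt_of_pos hnM one_pos) (lt_add_one _).le
  have hd : Tendsto (fun n : ℕ => Δ_[1] F (n + 1) - Δ_[1] F n) atTop (𝓝 0) := by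
    have hlog_ratio := (continuousAt_log (hl ▸ one_ne_zero)).tendsto.comp hseq
    rw [hl, log_one] at hlog_ratio
    exact hlog_ratio.congr' (hratio.mono fun n hn => by rw [Function.comp_apply, hn, log_exp])
  refine ⟨f 1, hf 1 one_pos, fun x hx => ⟨F (x + 1) - F 1, ?_, ?_⟩⟩
  · have hlog : ∀ t > 0, log (g t) = Δ_[1] F t := fun t ht => by rw [hg t ht, log_exp]
    have key := (hconv.tendsto_mul_fwdDiff_sub hd hx).add_const (F (x + 1) - F 1)
    rw [zero_add] at key
    refine key.congr' ?_
    filter_upwards [eventually_gt_atTop 0] with n hn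
    rw [sum_congr rfl fun k hk => by
      rw [hlog k (Nat.cast_pos.2 (mem_Icc.1 hk).1), hlog (x + k) (by positivity)],
      sum_Icc_fwdDiff_sub_fwdDiff_add, hlog n (Nat.cast_pos.2 hn), fwdDiff]
    ring_nf
  · rw [hl, one_rpow, mul_one, exp_sub, exp_log (hf _ (by linarith)), exp_log (hf 1 one_pos),
      mul_div_cancel₀ _ (hf 1 one_pos).ne']

theorem solution_via_limit_summand (g f : ℝ → ℝ) (l : ℝ)
    (hg : ∀ x > 0, 0 < g x) (hf : ∀ x > 0, 0 < f x)
    (hl0 : 0 < l) (hl1 : l ≤ 1)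
    (hseq : Tendsto (fun n : ℕ => g ((n : ℝ) + 1) / g n) atTop (nhds l))
    (hconv : ∃ M : ℝ, ConvexOn ℝ (Set.Ioi M) (fun x => Real.log (f x)))
    (hfe : ∀ x > 0, f (x + 1) = g x * f x) :
    ∃ c > 0, ∀ x > 0, ∃ L : ℝ,
      Tendsto (fun n : ℕ =>
          x * Real.log (g n) +
            ∑ k ∈ Finset.Icc 1 n, (Real.log (g k) - Real.log (g (x + k))))
        atTop (nhds L) ∧
      f (x + 1) = c * l ^ ((x ^ 2 + x) / 2) * Real.exp L :=
  solution_via_limit_summand_general g f l hf hl1 hseq hconv hfe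
end
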